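/- arXiv:2502.10030 — 2 statements merged into one kernel-verified Lean document; each statement's English description precedes it below -/
import Mathlib

section
/- Let {ρ_x, p(x)}_{x∈X} and {σ_y, q(y)}_{y∈Y} be two finite ensembles of density matrices on system S (with probability weights summing to 1), encoded as the classically-flagged beliefs β = Σ_x p(x) ρ_x⊗|x⟩⟨x| on S⊗R₁ and γ = Σ_y q(y) σ_y⊗|y⟩⟨y| on S⊗R₂, where {|x⟩} and {|y⟩} are standard orthonormal bases of R₁ and R₂. Then β and γ are equivalent beliefs if and only if Σ_x p(x) √ρ_x ⊗ √ρ_x = Σ_y q(y) √σ_y ⊗ √σ_y. -/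
open Matrix
open scoped Kronecker ComplexOrder


open Classical in
/-- The positive semidefinite square root of a matrix (zero if not PSD). -/
noncomputable def msqrt {n : Type*} [Fintype n] [DecidableEq n] (A : Matrix n n ℂ) :
    Matrix n n ℂ :=
  if h : A.PosSemidef then
    (h.1.eigenvectorUnitary : Matrix n n ℂ) * diagonal ((↑) ∘ (√·) ∘ h.1.eigenvalues) *
      (star h.1.eigenvectorUnitary : Matrix n n ℂ) else 0

/-- `A^{-1/2}`: the (nonsingular) inverse of the PSD square root. -/
noncomputable def invsqrt {n : Type*} [Fintype n] [DecidableEq n] (A : Matrix n n ℂ) :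
    Matrix n n ℂ :=
  (msqrt A)⁻¹

/-- Partial trace over the second factor `R`. -/
noncomputable def ptraceR {S R : Type*} [Fintype R] (M : Matrix (S × R) (S × R) ℂ) : Matrix S S ℂ :=
  Matrix.of fun s s' => ∑ r, M (s, r) (s', r)

/-- A density matrix: positive semidefinite with unit trace. -/
def IsDensity {n : Type*} [Fintype n] (A : Matrix n n ℂ) : Prop :=
  A.PosSemidef ∧ A.trace = 1

/-- The Choi matrix of a linear map between matrix algebras. -/
def choi {S T : Type*} [Fintype S] [DecidableEq S]
    (E : Matrix S S ℂ →ₗ[ℂ] Matrix T T ℂ) : Matrix (S × T) (S × T) ℂ :=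
  Matrix.of fun p q => E (Matrix.single p.1 q.1 1) p.2 q.2

/-- Completely positive trace-preserving map. -/
def IsCPTP {S T : Type*} [Fintype S] [DecidableEq S] [Fintype T]
    (E : Matrix S S ℂ →ₗ[ℂ] Matrix T T ℂ) : Prop :=
  (∀ X, (E X).trace = X.trace) ∧ (choi E).PosSemidef

/-- The Hilbert-Schmidt adjoint `E†`, satisfying `Tr[E(X)† Y] = Tr[X† E†(Y)]`. -/
noncomputable def adjMap {S T : Type*} [Fintype S] [DecidableEq S] [Fintype T]
    (E : Matrix S S ℂ →ₗ[ℂ] Matrix T T ℂ) (Y : Matrix T T ℂ) : Matrix S S ℂ :=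
  Matrix.of fun i j => ((E (Matrix.single i j 1))ᴴ * Y).trace

/-- The original Petz map `R^{E,βS}(σ) = √βS E†(E(βS)^{-1/2} σ E(βS)^{-1/2}) √βS`. -/
noncomputable def petz {S T : Type*} [Fintype S] [DecidableEq S] [Fintype T] [DecidableEq T]
    (E : Matrix S S ℂ →ₗ[ℂ] Matrix T T ℂ) (βS : Matrix S S ℂ) (σ : Matrix T T ℂ) :
    Matrix S S ℂ :=
  msqrt βS * adjMap E (invsqrt (E βS) * σ * invsqrt (E βS)) * msqrt βS

/-- The prior-extended Petz map `R^{E⊗Tr,β}`. -/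
noncomputable def petzExt {S R T : Type*} [Fintype S] [DecidableEq S]
    [Fintype R] [DecidableEq R] [Fintype T] [DecidableEq T]
    (E : Matrix S S ℂ →ₗ[ℂ] Matrix T T ℂ) (β : Matrix (S × R) (S × R) ℂ)
    (σ : Matrix T T ℂ) : Matrix (S × R) (S × R) ℂ :=
  msqrt β *
    (adjMap E (invsqrt (E (ptraceR β)) * σ * invsqrt (E (ptraceR β))) ⊗ₖ (1 : Matrix R R ℂ)) *
    msqrt β

/-- The retrodiction map `R_ext^{E,β} = Tr_R ∘ R^{E⊗Tr,β}`. -/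
noncomputable def retroExt {S R T : Type*} [Fintype S] [DecidableEq S]
    [Fintype R] [DecidableEq R] [Fintype T] [DecidableEq T]
    (E : Matrix S S ℂ →ₗ[ℂ] Matrix T T ℂ) (β : Matrix (S × R) (S × R) ℂ)
    (σ : Matrix T T ℂ) : Matrix S S ℂ :=
  ptraceR (petzExt E β σ)

/-- Two beliefs are equivalent if they induce the same retrodiction map for all channels. -/
def EquivBeliefs {S R₁ R₂ : Type*} [Fintype S] [DecidableEq S]
    [Fintype R₁] [DecidableEq R₁] [Fintype R₂] [DecidableEq R₂]
    (β : Matrix (S × R₁) (S × R₁) ℂ) (γ : Matrix (S × R₂) (S × R₂) ℂ) : Prop :=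
  ∀ (T : Type) (_ : Fintype T) (_ : DecidableEq T)
    (E : Matrix S S ℂ →ₗ[ℂ] Matrix T T ℂ),
    IsCPTP E → (E (ptraceR β)).PosDef → (E (ptraceR γ)).PosDef →
    ∀ σ : Matrix T T ℂ, retroExt E β σ = retroExt E γ σ

/-!
For a classically flagged belief `β = ∑ₓ p(x) ρₓ ⊗ |x⟩⟨x|` the square root `√β` is again
flagged, so the retrodiction map factors as `σ ↦ Φ(E†(W^{-1/2} σ W^{-1/2}))` with
`W = E(β_S)` and `Φ(A) = ∑ₓ p(x) √ρₓ A √ρₓ`, and `β_S = Φ(1)`. The entries of `Φ` are exactly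
those of `K = ∑ₓ p(x) √ρₓ ⊗ √ρₓ`, so equal `K` give equal retrodictions. Conversely, depolarizing
channels suffice to recover `Φ` from the retrodiction map.
-/

open scoped MatrixOrder

section Msqrt

variable {n : Type*} [Fintype n] [DecidableEq n] {A : Matrix n n ℂ}

lemma msqrt_eq_cfcSqrt (hA : A.PosSemidef) : msqrt A = CFC.sqrt A := by
  rw [msqrt, dif_pos hA, CFC.sqrt_eq_cfc, cfc_nnreal_eq_real _ A, hA.1.cfc_eq]
  simp only [IsHermitian.cfc, Unitary.conjStarAlgAut_apply]
  congr 3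
  funext i
  simp [Real.coe_sqrt, hA.eigenvalues_nonneg i]

lemma posSemidef_msqrt (hA : A.PosSemidef) : (msqrt A).PosSemidef := by
  rw [msqrt_eq_cfcSqrt hA]
  exact (CFC.sqrt_nonneg A).posSemidef

lemma msqrt_mul_msqrt (hA : A.PosSemidef) : msqrt A * msqrt A = A := by
  rw [msqrt_eq_cfcSqrt hA]
  exact CFC.sqrt_mul_sqrt_self A hA.nonneg

lemma msqrt_eq_of_mul_self {B : Matrix n n ℂ} (hB : B.PosSemidef) (h : B * B = A) :
    msqrt A = B := by
  have hA : A.PosSemidef := by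
    simpa [← h, hB.isHermitian.eq] using posSemidef_conjTranspose_mul_self B
  rw [msqrt_eq_cfcSqrt hA]
  exact CFC.sqrt_unique h hB.nonneg

lemma invsqrt_mul_msqrt_conj_mul_invsqrt (hA : A.PosDef) (B : Matrix n n ℂ) :
    invsqrt A * (msqrt A * B * msqrt A) * invsqrt A = B := by
  have hunit : IsUnit (msqrt A).det := by
    refine (isUnit_iff_isUnit_det _).mp (isUnit_of_mul_isUnit_left (y := msqrt A) ?_)
    rw [msqrt_mul_msqrt hA.posSemidef]
    exact hA.isUnit
  rw [invsqrt, ← mul_assoc, ← mul_assoc, nonsing_inv_mul _ hunit, one_mul, mul_assoc,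
    mul_nonsing_inv _ hunit, mul_one]

end Msqrt

section Flagged

variable {S X : Type*} [Fintype X] [DecidableEq X]

noncomputable def flagged (c : X → ℂ) (M : X → Matrix S S ℂ) : Matrix (S × X) (S × X) ℂ :=
  ∑ x, c x • (M x ⊗ₖ single x x 1)

lemma ptraceR_flagged (c : X → ℂ) (M : X → Matrix S S ℂ) :
    ptraceR (flagged c M) = ∑ x, c x • M x := by
  ext s s'
  simp only [ptraceR, flagged, of_apply, Matrix.sum_apply, Matrix.smul_apply,
    kroneckerMap_apply]
  rw [Finset.sum_comm]
  simp [single_apply]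

lemma flagged_mul_kronecker_one_mul [Fintype S] (c d : X → ℂ) (M N : X → Matrix S S ℂ)
    (A : Matrix S S ℂ) :
    flagged c M * (A ⊗ₖ (1 : Matrix X X ℂ)) * flagged d N =
      flagged (fun x => c x * d x) (fun x => M x * A * N x) := by
  simp only [flagged, Finset.sum_mul, Finset.mul_sum, smul_mul_assoc, mul_smul_comm,
    ← mul_kronecker_mul, mul_one]
  refine Finset.sum_congr rfl fun x _ => ?_
  rw [Finset.sum_eq_single x (fun y _ hyx => by rw [single_mul_single_of_ne (h := hyx)]; simp)
    (by simp), single_mul_single_same, one_mul, smul_smul, mul_comm]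

lemma posSemidef_flagged [Fintype S] {c : X → ℂ} {M : X → Matrix S S ℂ} (hc : ∀ x, 0 ≤ c x)
    (hM : ∀ x, (M x).PosSemidef) : (flagged c M).PosSemidef := by
  refine posSemidef_sum _ fun x _ => ((hM x).kronecker ?_).smul (hc x)
  simpa [conjTranspose_single] using posSemidef_conjTranspose_mul_self (single x x (1 : ℂ))

lemma msqrt_flagged [Fintype S] [DecidableEq S] {p : X → ℝ} {ρ : X → Matrix S S ℂ}
    (hp : ∀ x, 0 ≤ p x) (hρ : ∀ x, (ρ x).PosSemidef) :
    msqrt (flagged (fun x => (p x : ℂ)) ρ) =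
      flagged (fun x => (√(p x) : ℂ)) (fun x => msqrt (ρ x)) := by
  refine msqrt_eq_of_mul_self
    (posSemidef_flagged (fun x => ?_) fun x => posSemidef_msqrt (hρ x)) ?_
  · exact_mod_cast Real.sqrt_nonneg (p x)
  · have := flagged_mul_kronecker_one_mul (fun x => (√(p x) : ℂ)) (fun x => (√(p x) : ℂ))
      (fun x => msqrt (ρ x)) (fun x => msqrt (ρ x)) 1
    simp only [one_kronecker_one, mul_one, msqrt_mul_msqrt (hρ _)] at this
    rw [this]
    congr
    funext x
    rw [← Complex.ofReal_mul, Real.mul_self_sqrt (hp x)]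

end Flagged

section EnsembleMap

variable {S X Y : Type*} [Fintype S] [Fintype X] [Fintype Y]

noncomputable def ensembleMap (c : X → ℂ) (M : X → Matrix S S ℂ) :
    Matrix S S ℂ →ₗ[ℂ] Matrix S S ℂ :=
  ∑ x, c x • (LinearMap.mulLeft ℂ (M x) ∘ₗ LinearMap.mulRight ℂ (M x))

lemma ensembleMap_apply (c : X → ℂ) (M : X → Matrix S S ℂ) (A : Matrix S S ℂ) :
    ensembleMap c M A = ∑ x, c x • (M x * A * M x) := by
  simp [ensembleMap, mul_assoc]

lemma ensembleMap_apply_apply (c : X → ℂ) (M : X → Matrix S S ℂ) (A : Matrix S S ℂ) (i j : S) :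
    ensembleMap c M A i j = ∑ k, ∑ l, A k l * (∑ x, c x • (M x ⊗ₖ M x)) (i, l) (k, j) := by
  simp only [ensembleMap_apply, Matrix.sum_apply, Matrix.smul_apply, mul_apply,
    kroneckerMap_apply, smul_eq_mul, Finset.mul_sum, Finset.sum_mul]
  rw [Finset.sum_comm]
  conv_rhs => rw [Finset.sum_comm]
  refine Finset.sum_congr rfl fun l _ => ?_
  rw [Finset.sum_comm]
  exact Finset.sum_congr rfl fun k _ => Finset.sum_congr rfl fun x _ => by ring

lemma ensembleMap_single_apply [DecidableEq S] (c : X → ℂ) (M : X → Matrix S S ℂ) (i j k l : S) :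
    ensembleMap c M (single k l 1) i j = (∑ x, c x • (M x ⊗ₖ M x)) (i, l) (k, j) := by
  simp [ensembleMap_apply_apply, single_apply, ite_and]

theorem ensembleMap_eq_ensembleMap_iff [DecidableEq S] {c : X → ℂ} {M : X → Matrix S S ℂ}
    {d : Y → ℂ} {N : Y → Matrix S S ℂ} :
    ensembleMap c M = ensembleMap d N ↔
      ∑ x, c x • (M x ⊗ₖ M x) = ∑ y, d y • (N y ⊗ₖ N y) := by
  constructor
  · intro h
    ext ⟨i, l⟩ ⟨k, j⟩
    rw [← ensembleMap_single_apply, ← ensembleMap_single_apply, h]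
  · intro h
    ext A i j
    rw [ensembleMap_apply_apply, ensembleMap_apply_apply, h]

lemma ensembleMap_msqrt_one [DecidableEq S] (c : X → ℂ) {ρ : X → Matrix S S ℂ}
    (hρ : ∀ x, (ρ x).PosSemidef) :
    ensembleMap c (fun x => msqrt (ρ x)) 1 = ∑ x, c x • ρ x := by
  simp [ensembleMap_apply, msqrt_mul_msqrt (hρ _)]

lemma retroExt_flagged [DecidableEq S] [DecidableEq X] {T : Type*} [Fintype T] [DecidableEq T]
    {p : X → ℝ} {ρ : X → Matrix S S ℂ} (hp : ∀ x, 0 ≤ p x) (hρ : ∀ x, (ρ x).PosSemidef)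
    (E : Matrix S S ℂ →ₗ[ℂ] Matrix T T ℂ) (τ : Matrix T T ℂ) :
    retroExt E (flagged (fun x => (p x : ℂ)) ρ) τ =
      ensembleMap (fun x => (p x : ℂ)) (fun x => msqrt (ρ x))
        (adjMap E
          (invsqrt (E (∑ x, (p x : ℂ) • ρ x)) * τ * invsqrt (E (∑ x, (p x : ℂ) • ρ x)))) := by
  rw [retroExt, petzExt, msqrt_flagged hp hρ, flagged_mul_kronecker_one_mul, ptraceR_flagged,
    ptraceR_flagged, ensembleMap_apply]
  simp_rw [← Complex.ofReal_mul, Real.mul_self_sqrt (hp _)]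

end EnsembleMap

section Channels

variable {S T T' : Type*} [Fintype S] [DecidableEq S] [Fintype T] [Fintype T']

lemma trace_submatrix_equiv (e : T' ≃ T) (M : Matrix T T ℂ) :
    (M.submatrix e e).trace = M.trace :=
  Fintype.sum_equiv e _ _ fun _ => rfl

lemma trace_single (i j : S) (c : ℂ) : (single i j c).trace = if i = j then c else 0 := by
  obtain rfl | hij := eq_or_ne i j
  · simp
  · simp [trace_single_eq_of_ne _ _ _ hij, hij]

lemma IsCPTP.reindex {E : Matrix S S ℂ →ₗ[ℂ] Matrix T T ℂ} (hE : IsCPTP E) (e : T ≃ T') :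
    IsCPTP ((reindexLinearEquiv ℂ ℂ e e).toLinearMap ∘ₗ E) := by
  refine ⟨fun X => ?_, ?_⟩
  · simpa [reindex_apply, trace_submatrix_equiv] using hE.1 X
  · exact hE.2.submatrix (Prod.map id e.symm)

lemma adjMap_reindex {E : Matrix S S ℂ →ₗ[ℂ] Matrix T T ℂ} (e : T ≃ T') (Y : Matrix T' T' ℂ) :
    adjMap ((reindexLinearEquiv ℂ ℂ e e).toLinearMap ∘ₗ E) Y =
      adjMap E (Y.submatrix e e) := by
  ext i j
  simp only [adjMap, of_apply, LinearMap.comp_apply, LinearEquiv.coe_coe,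
    coe_reindexLinearEquiv, reindex_apply, conjTranspose_submatrix]
  rw [← trace_submatrix_equiv e.symm, ← submatrix_mul_equiv _ _ _ e.symm, submatrix_submatrix]
  simp

lemma adjMap_one_of_trace [DecidableEq T] {E : Matrix S S ℂ →ₗ[ℂ] Matrix T T ℂ}
    (hE : ∀ X, (E X).trace = X.trace) : adjMap E 1 = 1 := by
  ext i j
  rw [adjMap, of_apply, mul_one, trace_conjTranspose, hE, trace_single, one_apply]
  simp

end Channels

section Depolarizing

variable {S : Type*} [Fintype S] [DecidableEq S]

noncomputable def depolarizing (S : Type*) [Fintype S] [DecidableEq S] (t : ℝ) :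
    Matrix S S ℂ →ₗ[ℂ] Matrix S S ℂ :=
  ((t / Fintype.card S : ℝ) : ℂ) • (traceLinearMap S ℂ ℂ).smulRight 1 +
    ((1 - t : ℝ) : ℂ) • LinearMap.id

lemma depolarizing_apply (t : ℝ) (X : Matrix S S ℂ) :
    depolarizing S t X =
      ((t / Fintype.card S : ℝ) : ℂ) • (X.trace • 1) + ((1 - t : ℝ) : ℂ) • X :=
  rfl

lemma trace_depolarizing [Nonempty S] (t : ℝ) (X : Matrix S S ℂ) :
    (depolarizing S t X).trace = X.trace := by
  have hd : (Fintype.card S : ℂ) ≠ 0 := Nat.cast_ne_zero.mpr Fintype.card_ne_zero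
  simp only [depolarizing_apply, trace_add, trace_smul, trace_one, smul_eq_mul]
  push_cast
  field_simp
  ring

/-- The second term is `|Ω⟩⟨Ω|` with `Ω = ∑ₛ |s⟩|s⟩`, the Choi matrix of the identity. -/
lemma choi_depolarizing (t : ℝ) :
    choi (depolarizing S t) =
      ((t / Fintype.card S : ℝ) : ℂ) • 1 +
        ((1 - t : ℝ) : ℂ) • vecMulVec (fun st : S × S => if st.1 = st.2 then 1 else 0)
          (star fun st : S × S => if st.1 = st.2 then 1 else 0) := by
  ext ⟨s, a⟩ ⟨s', b⟩
  simp only [choi, of_apply, depolarizing_apply, Matrix.add_apply, Matrix.smul_apply, one_apply,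
    vecMulVec_apply, Pi.star_apply, smul_eq_mul, single_apply, Prod.mk.injEq, trace_single]
  split_ifs <;> simp_all

lemma isCPTP_depolarizing [Nonempty S] {t : ℝ} (ht0 : 0 ≤ t) (ht1 : t ≤ 1) :
    IsCPTP (depolarizing S t) := by
  refine ⟨trace_depolarizing t, ?_⟩
  rw [choi_depolarizing]
  refine (PosSemidef.one.smul ?_).add ((posSemidef_vecMulVec_self_star _).smul ?_)
  · exact_mod_cast div_nonneg ht0 (Nat.cast_nonneg _)
  · exact_mod_cast sub_nonneg.mpr ht1

lemma posDef_depolarizing [Nonempty S] {t : ℝ} (ht0 : 0 < t) (ht1 : t ≤ 1)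
    {M : Matrix S S ℂ} (hM : IsDensity M) : (depolarizing S t M).PosDef := by
  rw [depolarizing_apply, hM.2, one_smul]
  refine (PosDef.one.smul ?_).add_posSemidef (hM.1.smul ?_)
  · exact_mod_cast div_pos ht0 (Nat.cast_pos.mpr Fintype.card_pos)
  · exact_mod_cast sub_nonneg.mpr ht1

lemma adjMap_depolarizing (t : ℝ) (Y : Matrix S S ℂ) :
    adjMap (depolarizing S t) Y =
      ((t / Fintype.card S : ℝ) : ℂ) • (Y.trace • 1) + ((1 - t : ℝ) : ℂ) • Y := by
  ext i j
  simp only [adjMap, of_apply, depolarizing_apply, conjTranspose_add, conjTranspose_smul,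
    add_mul, smul_mul_assoc, trace_add, trace_smul, conjTranspose_one, one_mul,
    conjTranspose_single, trace_single_mul, trace_single]
  simp [one_apply, mul_comm]

end Depolarizing

lemma isDensity_sum_smul {ι n : Type*} [Fintype ι] [Fintype n] {w : ι → ℝ}
    {M : ι → Matrix n n ℂ} (hM : ∀ i, IsDensity (M i)) (hw0 : ∀ i, 0 ≤ w i)
    (hw1 : ∑ i, w i = 1) : IsDensity (∑ i, (w i : ℂ) • M i) := by
  refine ⟨posSemidef_sum _ fun i _ => (hM i).1.smul (by exact_mod_cast hw0 i), ?_⟩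
  simp [trace_sum, (hM _).2, ← Complex.ofReal_sum, hw1]

section Retrodiction

variable {S X Y : Type*} [Fintype S] [DecidableEq S] [Fintype X] [DecidableEq X]
  [Fintype Y] [DecidableEq Y] {p : X → ℝ} {ρ : X → Matrix S S ℂ} {q : Y → ℝ}
  {σ : Y → Matrix S S ℂ}

/-- Feeding the state `√W B √W`, with `W = E(β_S)`, cancels the normalisation
`W^{-1/2} · W^{-1/2}` of the Petz map. -/
theorem EquivBeliefs.ensembleMap_adjMap_eq
    (h : EquivBeliefs (flagged (fun x => (p x : ℂ)) ρ) (flagged (fun y => (q y : ℂ)) σ))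
    (hp : ∀ x, 0 ≤ p x) (hρ : ∀ x, (ρ x).PosSemidef) (hq : ∀ y, 0 ≤ q y)
    (hσ : ∀ y, (σ y).PosSemidef) {T : Type} [Fintype T] [DecidableEq T]
    {E : Matrix S S ℂ →ₗ[ℂ] Matrix T T ℂ} (hE : IsCPTP E)
    (hW : (E (∑ x, (p x : ℂ) • ρ x)).PosDef)
    (hEq : E (∑ x, (p x : ℂ) • ρ x) = E (∑ y, (q y : ℂ) • σ y)) (B : Matrix T T ℂ) :
    ensembleMap (fun x => (p x : ℂ)) (fun x => msqrt (ρ x)) (adjMap E B) =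
      ensembleMap (fun y => (q y : ℂ)) (fun y => msqrt (σ y)) (adjMap E B) := by
  have := h T inferInstance inferInstance E hE (by rwa [ptraceR_flagged])
    (by rwa [ptraceR_flagged, ← hEq])
    (msqrt (E (∑ x, (p x : ℂ) • ρ x)) * B * msqrt (E (∑ x, (p x : ℂ) • ρ x)))
  rwa [retroExt_flagged hp hρ, retroExt_flagged hq hσ, ← hEq,
    invsqrt_mul_msqrt_conj_mul_invsqrt hW] at this

theorem EquivBeliefs.ensembleMap_adjMap_depolarizing_eq [Nonempty S]
    (h : EquivBeliefs (flagged (fun x => (p x : ℂ)) ρ) (flagged (fun y => (q y : ℂ)) σ))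
    (hp : ∀ x, 0 ≤ p x) (hρ : ∀ x, (ρ x).PosSemidef) (hq : ∀ y, 0 ≤ q y)
    (hσ : ∀ y, (σ y).PosSemidef) (hβ : IsDensity (∑ x, (p x : ℂ) • ρ x)) {t : ℝ}
    (ht0 : 0 < t) (ht1 : t ≤ 1)
    (hEq : depolarizing S t (∑ x, (p x : ℂ) • ρ x) = depolarizing S t (∑ y, (q y : ℂ) • σ y))
    (A : Matrix S S ℂ) :
    ensembleMap (fun x => (p x : ℂ)) (fun x => msqrt (ρ x)) (adjMap (depolarizing S t) A) =
      ensembleMap (fun y => (q y : ℂ)) (fun y => msqrt (σ y)) (adjMap (depolarizing S t) A) := by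
  let e := Fintype.equivFin S
  have := h.ensembleMap_adjMap_eq hp hρ hq hσ ((isCPTP_depolarizing ht0.le ht1).reindex e)
    ((posDef_depolarizing ht0 ht1 hβ).submatrix e.symm.injective)
    (by rw [LinearMap.comp_apply, LinearMap.comp_apply, hEq])
    (A.submatrix e.symm e.symm)
  simpa [adjMap_reindex] using this

/-- Full depolarization (`t = 1`) forgets everything but the trace, so it compares the
marginals; half depolarization keeps the image faithful while retaining all of `A`. -/
theorem EquivBeliefs.ensembleMap_eq
    (h : EquivBeliefs (flagged (fun x => (p x : ℂ)) ρ) (flagged (fun y => (q y : ℂ)) σ))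
    (hp : ∀ x, 0 ≤ p x) (hρ : ∀ x, (ρ x).PosSemidef) (hq : ∀ y, 0 ≤ q y)
    (hσ : ∀ y, (σ y).PosSemidef) (hβ : IsDensity (∑ x, (p x : ℂ) • ρ x))
    (hγ : IsDensity (∑ y, (q y : ℂ) • σ y)) :
    ensembleMap (fun x => (p x : ℂ)) (fun x => msqrt (ρ x)) =
      ensembleMap (fun y => (q y : ℂ)) (fun y => msqrt (σ y)) := by
  cases isEmpty_or_nonempty S
  · ext A i
    exact isEmptyElim i
  have hmarg : ∑ x, (p x : ℂ) • ρ x = ∑ y, (q y : ℂ) • σ y := by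
    have := h.ensembleMap_adjMap_depolarizing_eq hp hρ hq hσ hβ one_pos le_rfl
      (by simp only [depolarizing_apply, hβ.2, hγ.2, sub_self, Complex.ofReal_zero, zero_smul]) 1
    rwa [adjMap_one_of_trace (trace_depolarizing 1), ensembleMap_msqrt_one _ hρ,
      ensembleMap_msqrt_one _ hσ] at this
  ext1 A
  have := h.ensembleMap_adjMap_depolarizing_eq hp hρ hq hσ hβ (t := 1 / 2) (by norm_num)
    (by norm_num) (by rw [hmarg]) A
  simp only [adjMap_depolarizing, map_add, map_smul, ensembleMap_msqrt_one _ hρ,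
    ensembleMap_msqrt_one _ hσ, hmarg] at this
  exact smul_right_injective _ (by norm_num) (add_left_cancel this)

theorem equivBeliefs_flagged_of_ensembleMap_eq (hp : ∀ x, 0 ≤ p x)
    (hρ : ∀ x, (ρ x).PosSemidef) (hq : ∀ y, 0 ≤ q y) (hσ : ∀ y, (σ y).PosSemidef)
    (hΦ : ensembleMap (fun x => (p x : ℂ)) (fun x => msqrt (ρ x)) =
      ensembleMap (fun y => (q y : ℂ)) (fun y => msqrt (σ y))) :
    EquivBeliefs (flagged (fun x => (p x : ℂ)) ρ) (flagged (fun y => (q y : ℂ)) σ) := by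
  intro T _ _ E _ _ _ τ
  have hmarg : ∑ x, (p x : ℂ) • ρ x = ∑ y, (q y : ℂ) • σ y := by
    rw [← ensembleMap_msqrt_one _ hρ, hΦ, ensembleMap_msqrt_one _ hσ]
  rw [retroExt_flagged hp hρ, retroExt_flagged hq hσ, hmarg, hΦ]

end Retrodiction

/-- Two mixed-state ensembles are equivalent beliefs iff
`Σ_x p(x) √ρ_x ⊗ √ρ_x = Σ_y q(y) √σ_y ⊗ √σ_y`. -/
theorem mixed_ensembles_equiv_iff
    {S X Y : Type*} [Fintype S] [DecidableEq S]
    [Fintype X] [DecidableEq X] [Fintype Y] [DecidableEq Y]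
    (ρ : X → Matrix S S ℂ) (σ : Y → Matrix S S ℂ) (p : X → ℝ) (q : Y → ℝ)
    (hρ : ∀ x, IsDensity (ρ x)) (hσ : ∀ y, IsDensity (σ y))
    (hp : ∀ x, 0 ≤ p x) (hq : ∀ y, 0 ≤ q y)
    (hp1 : ∑ x, p x = 1) (hq1 : ∑ y, q y = 1) :
    EquivBeliefs
      (∑ x, (p x : ℂ) • (ρ x ⊗ₖ Matrix.single x x (1 : ℂ)))
      (∑ y, (q y : ℂ) • (σ y ⊗ₖ Matrix.single y y (1 : ℂ))) ↔
    (∑ x, (p x : ℂ) • (msqrt (ρ x) ⊗ₖ msqrt (ρ x))) =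
      ∑ y, (q y : ℂ) • (msqrt (σ y) ⊗ₖ msqrt (σ y)) := by
  have hρ' : ∀ x, (ρ x).PosSemidef := fun x => (hρ x).1
  have hσ' : ∀ y, (σ y).PosSemidef := fun y => (hσ y).1
  change EquivBeliefs (flagged _ ρ) (flagged _ σ) ↔ _
  rw [← ensembleMap_eq_ensembleMap_iff]
  exact ⟨fun h => h.ensembleMap_eq hp hρ' hq hσ' (isDensity_sum_smul hρ hp hp1)
    (isDensity_sum_smul hσ hq hq1), equivBeliefs_flagged_of_ensembleMap_eq hp hρ' hq hσ'⟩
end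

section
/- If the belief features no correlation between S and R, i.e., β = β_S ⊗ β_R with β_S a density matrix on S and β_R a density matrix on R, then the retrodiction map reduces to the original Petz map: for every CPTP map E from S to T with E(β_S) positive definite and every matrix σ on T, R_ext^{E, β_S⊗β_R}(σ) = √β_S · E†(E(β_S)^{-1/2} σ E(β_S)^{-1/2}) · √β_S. -/
/- For a product belief the square root factorises, `√(β_S ⊗ β_R) = √β_S ⊗ √β_R`, and the
marginal is `β_S` because `Tr β_R = 1`. Hence the prior-extended Petz map equals
`petz E β_S σ ⊗ β_R`, whose partial trace over `R` is `petz E β_S σ`. -/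

open Matrix
open scoped Kronecker ComplexOrder


open scoped MatrixOrder

lemma Matrix.PosSemidef.msqrt_eq_sqrt {n : Type*} [Fintype n] [DecidableEq n]
    {A : Matrix n n ℂ} (hA : A.PosSemidef) : msqrt A = CFC.sqrt A := by
  rw [msqrt, dif_pos hA, CFC.sqrt_eq_real_sqrt A hA.nonneg, cfcₙ_eq_cfc, hA.1.cfc_eq]
  rfl

lemma Matrix.PosSemidef.msqrt_mul_self {n : Type*} [Fintype n] [DecidableEq n]
    {A : Matrix n n ℂ} (hA : A.PosSemidef) : msqrt A * msqrt A = A := by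
  rw [hA.msqrt_eq_sqrt, CFC.sqrt_mul_sqrt_self A hA.nonneg]

lemma msqrt_kronecker {m n : Type*} [Fintype m] [Fintype n] [DecidableEq m] [DecidableEq n]
    {A : Matrix m m ℂ} {B : Matrix n n ℂ} (hA : A.PosSemidef) (hB : B.PosSemidef) :
    msqrt (A ⊗ₖ B) = msqrt A ⊗ₖ msqrt B := by
  rw [(hA.kronecker hB).msqrt_eq_sqrt, hA.msqrt_eq_sqrt, hB.msqrt_eq_sqrt]
  refine CFC.sqrt_unique ?_
    ((CFC.sqrt_nonneg A).posSemidef.kronecker (CFC.sqrt_nonneg B).posSemidef).nonneg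
  rw [← mul_kronecker_mul, CFC.sqrt_mul_sqrt_self A hA.nonneg,
    CFC.sqrt_mul_sqrt_self B hB.nonneg]

lemma ptraceR_kronecker {S R : Type*} [Fintype R] (M : Matrix S S ℂ) (N : Matrix R R ℂ) :
    ptraceR (M ⊗ₖ N) = N.trace • M := by
  ext s s'
  simp [ptraceR, trace, diag, Finset.mul_sum, mul_comm]

lemma ptraceR_kronecker_of_trace_eq_one {S R : Type*} [Fintype R] (M : Matrix S S ℂ)
    {N : Matrix R R ℂ} (hN : N.trace = 1) : ptraceR (M ⊗ₖ N) = M := by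
  rw [ptraceR_kronecker, hN, one_smul]

lemma petzExt_kronecker {S R T : Type*} [Fintype S] [DecidableEq S]
    [Fintype R] [DecidableEq R] [Fintype T] [DecidableEq T]
    (E : Matrix S S ℂ →ₗ[ℂ] Matrix T T ℂ) {βS : Matrix S S ℂ} {βR : Matrix R R ℂ}
    (hβS : βS.PosSemidef) (hβR : IsDensity βR) (σ : Matrix T T ℂ) :
    petzExt E (βS ⊗ₖ βR) σ = petz E βS σ ⊗ₖ βR := by
  rw [petzExt, ptraceR_kronecker_of_trace_eq_one βS hβR.2, msqrt_kronecker hβS hβR.1, petz,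
    ← mul_kronecker_mul, ← mul_kronecker_mul, mul_one, hβR.1.msqrt_mul_self]

theorem retroExt_of_uncorrelated_eq_petz_general
    {S R T : Type*} [Fintype S] [DecidableEq S]
    [Fintype R] [DecidableEq R] [Fintype T] [DecidableEq T]
    (βS : Matrix S S ℂ) (βR : Matrix R R ℂ)
    (hβS : IsDensity βS) (hβR : IsDensity βR)
    (E : Matrix S S ℂ →ₗ[ℂ] Matrix T T ℂ) (σ : Matrix T T ℂ) :
    retroExt E (βS ⊗ₖ βR) σ = petz E βS σ := by
  rw [retroExt, petzExt_kronecker E hβS.1 hβR σ, ptraceR_kronecker_of_trace_eq_one _ hβR.2]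

/-- For an uncorrelated belief `β_S ⊗ β_R`, the retrodiction map
reduces to the original Petz map with prior `β_S`. -/
theorem retroExt_of_uncorrelated_eq_petz
    {S R T : Type*} [Fintype S] [DecidableEq S]
    [Fintype R] [DecidableEq R] [Fintype T] [DecidableEq T]
    (βS : Matrix S S ℂ) (βR : Matrix R R ℂ)
    (hβS : IsDensity βS) (hβR : IsDensity βR)
    (E : Matrix S S ℂ →ₗ[ℂ] Matrix T T ℂ) (hE : IsCPTP E)
    (hpd : (E βS).PosDef) (σ : Matrix T T ℂ) :
    retroExt E (βS ⊗ₖ βR) σ = petz E βS σ :=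
  retroExt_of_uncorrelated_eq_petz_general βS βR hβS hβR E σ
end
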